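/- arXiv:1402.4053 — 3 statements merged into one kernel-verified Lean document; each statement's English description precedes it below -/
import Mathlib

section
/- Let n ≥ 2 and let e_1,…,e_n be the standard basis vectors of ℝ^n. Define A_1 := e_1e_1^⊤ and A_j := e_1e_1^⊤ + e_je_1^⊤ + e_1e_j^⊤ for j = 2,…,n. Then for all z, w ∈ ℝ^n with z_1 ≠ 0, if w^⊤A_j w = z^⊤A_j z for all j = 1,…,n, then w = z or w = −z. In particular, these n measurement matrices determine every signal z ∈ ℝ^n with z_1 ≠ 0 up to a global sign. -/
open Matrix

lemma quad_std (n : ℕ) (i j : Fin n) (v : Fin n → ℝ) :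
    v ⬝ᵥ (Matrix.single i j (1 : ℝ)).mulVec v = v i * v j := by
  simp only [Matrix.mulVec, dotProduct, Matrix.single, Matrix.of_apply,
    mul_ite, mul_one, mul_zero, Finset.mul_sum]
  rw [Finset.sum_eq_single i]
  · rw [Finset.sum_eq_single j] <;> simp +contextual [eq_comm]
  · intro b _ hb
    apply Finset.sum_eq_zero
    intro x _
    simp [Ne.symm hb]
  · simp

/-- Let `n ≥ 2` and `e_1, …, e_n` the standard basis of `ℝ^n`.
With `A_1 = e_1 e_1ᵀ` and `A_j = e_1 e_1ᵀ + e_j e_1ᵀ + e_1 e_jᵀ` for `j ≠ 1`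
(`e_i e_jᵀ = stdBasisMatrix i j 1`), every signal `z` with `z_1 ≠ 0` is determined
up to a global sign by the quadratic measurements `z ↦ zᵀ A_j z`. -/
theorem stmt_0 (n : ℕ) [NeZero n] (hn : 2 ≤ n)
    (A : Fin n → Matrix (Fin n) (Fin n) ℝ)
    (hA1 : A 0 = Matrix.single 0 0 (1 : ℝ))
    (hAj : ∀ j : Fin n, j ≠ 0 → A j =
      Matrix.single 0 0 (1 : ℝ) + Matrix.single j 0 1
        + Matrix.single 0 j 1)
    (z w : Fin n → ℝ) (hz : z 0 ≠ 0)
    (h : ∀ j : Fin n, w ⬝ᵥ (A j).mulVec w = z ⬝ᵥ (A j).mulVec z) :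
    w = z ∨ w = -z := by
  have h0 : w 0 * w 0 = z 0 * z 0 := by
    have := h 0
    rwa [hA1, quad_std, quad_std] at this
  have hj : ∀ j : Fin n, j ≠ 0 → w 0 * w j = z 0 * z j := by
    intro j hj0
    have := h j
    rw [hAj j hj0] at this
    simp only [Matrix.add_mulVec, dotProduct_add, quad_std] at this
    have : w 0 * w 0 + (w j * w 0 + w 0 * w j) = z 0 * z 0 + (z j * z 0 + z 0 * z j) := by
      linarith
    rw [h0] at this
    nlinarith [this]
  rcases mul_self_eq_mul_self_iff.mp h0 with he | he
  · left
    funext j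
    by_cases hj0 : j = 0
    · simp [hj0, he]
    · have := hj j hj0
      rw [he] at this
      exact mul_left_cancel₀ hz this
  · right
    funext j
    by_cases hj0 : j = 0
    · simp [hj0, he]
    · have := hj j hj0
      rw [he] at this
      have : z 0 * w j = z 0 * (- z j) := by ring_nf; linarith
      simpa using mul_left_cancel₀ hz this
end

section
/- Let n ≥ 2 and let a_1,…,a_n ∈ ℝ^n be arbitrary vectors (so the measurement matrices a_ia_i^⊤ all have rank at most one). Then the set of z ∈ ℝ^n that are identifiable up to sign from the n measurements ⟨a_i, z⟩², i = 1,…,n — that is, the set {z ∈ ℝ^n : every w ∈ ℝ^n with ⟨a_i, w⟩² = ⟨a_i, z⟩² for all i satisfies w = z or w = −z} — has Lebesgue measure zero. In other words, no n rank-one measurements are generically identifying for real signals. -/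
open Matrix MeasureTheory

lemma null_of_mulVec_zero {n : ℕ} (M : Matrix (Fin n) (Fin n) ℝ) (hM : M ≠ 0) :
    volume {z : Fin n → ℝ | M.mulVec z = 0} = 0 := by
  have hset : {z : Fin n → ℝ | M.mulVec z = 0} = (LinearMap.ker M.mulVecLin : Set (Fin n → ℝ)) := by
    ext z; simp [LinearMap.mem_ker]
  rw [hset]
  apply Measure.addHaar_submodule
  intro htop
  apply hM
  ext i j
  have hz : M.mulVec (Pi.single j 1) = 0 := by
    have := htop ▸ Submodule.mem_top (x := Pi.single j (1:ℝ))
    simpa [LinearMap.mem_ker] using this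
  have := congrFun hz i
  simpa [Matrix.mulVec_single] using this

/-- For any `n ≥ 2` vectors `a_1, …, a_n ∈ ℝ^n` (rank-one
measurement matrices `a_i a_iᵀ`), the set of signals `z ∈ ℝ^n` identifiable up to
sign from the `n` measurements `⟨a_i, z⟩²` has Lebesgue measure zero: no `n`
rank-one measurements are generically identifying for real signals. -/
theorem stmt_2 (n : ℕ) (hn : 2 ≤ n) (a : Fin n → (Fin n → ℝ)) :
    volume {z : Fin n → ℝ |
      ∀ w : Fin n → ℝ, (∀ i : Fin n, (a i ⬝ᵥ w) ^ 2 = (a i ⬝ᵥ z) ^ 2) →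
        w = z ∨ w = -z} = 0 := by
  set A : Matrix (Fin n) (Fin n) ℝ := Matrix.of a with hA
  by_cases hdet : A.det = 0
  · -- singular case: the set is empty
    obtain ⟨v, hv, hAv⟩ := (Matrix.exists_mulVec_eq_zero_iff).2 hdet
    convert measure_empty (μ := volume)
    ext z
    simp only [Set.mem_setOf_eq, Set.mem_empty_iff_false, iff_false]
    intro hz
    have hdotv : ∀ i, a i ⬝ᵥ v = 0 := fun i => congrFun hAv i
    have h1 := hz (z + v) (by
      intro i
      have : a i ⬝ᵥ (z + v) = a i ⬝ᵥ z := by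
        rw [dotProduct_add, hdotv, add_zero]
      rw [this])
    have h2 := hz (z - v) (by
      intro i
      have : a i ⬝ᵥ (z - v) = a i ⬝ᵥ z := by
        rw [dotProduct_sub, hdotv, sub_zero]
      rw [this])
    rcases h1 with h1 | h1
    · exact hv (by simpa using congrArg (· - z) h1)
    · rcases h2 with h2 | h2
      · exact hv (by simpa [sub_eq_iff_eq_add] using h2)
      · -- z + v = -z and z - v = -z → v = 0
        apply hv
        funext i
        have e1 := congrFun h1 i
        have e2 := congrFun h2 i
        simp only [Pi.add_apply, Pi.sub_apply, Pi.neg_apply] at e1 e2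
        have : v i = 0 := by linarith
        simpa using this
  · -- invertible case
    have hU : IsUnit A.det := isUnit_iff_ne_zero.2 hdet
    set ε : Fin n → ℝ := fun i => if i = ⟨0, by omega⟩ then -1 else 1 with hε
    set D : Matrix (Fin n) (Fin n) ℝ := Matrix.diagonal ε with hD
    set T : Matrix (Fin n) (Fin n) ℝ := A⁻¹ * D * A with hT
    have hAT : A * T = D * A := by
      rw [hT, ← Matrix.mul_assoc, ← Matrix.mul_assoc, Matrix.mul_nonsing_inv A hU, Matrix.one_mul]
    have key : {z : Fin n → ℝ |
        ∀ w : Fin n → ℝ, (∀ i : Fin n, (a i ⬝ᵥ w) ^ 2 = (a i ⬝ᵥ z) ^ 2) →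
          w = z ∨ w = -z} ⊆
        {z | (T - 1).mulVec z = 0} ∪ {z | (T + 1).mulVec z = 0} := by
      intro z hz
      have hmeas : ∀ i, (a i ⬝ᵥ (T.mulVec z)) ^ 2 = (a i ⬝ᵥ z) ^ 2 := by
        intro i
        have h1 : a i ⬝ᵥ (T.mulVec z) = (A.mulVec (T.mulVec z)) i := rfl
        have h2 : A.mulVec (T.mulVec z) = D.mulVec (A.mulVec z) := by
          rw [Matrix.mulVec_mulVec, hAT, ← Matrix.mulVec_mulVec]
        have h3 : (D.mulVec (A.mulVec z)) i = ε i * (A.mulVec z) i := by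
          simp [hD, Matrix.mulVec_diagonal]
        have hε2 : ε i ^ 2 = 1 := by by_cases h : i = ⟨0, by omega⟩ <;> simp [hε, h]
        rw [h1, h2, h3, mul_pow, hε2, one_mul]
        rfl
      rcases hz (T.mulVec z) hmeas with h | h
      · left
        show (T - 1).mulVec z = 0
        rw [Matrix.sub_mulVec, Matrix.one_mulVec, h, sub_self]
      · right
        show (T + 1).mulVec z = 0
        rw [Matrix.add_mulVec, Matrix.one_mulVec, h, neg_add_cancel]
    have hT1 : T - 1 ≠ 0 := by
      intro h
      have : T = 1 := by rwa [sub_eq_zero] at h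
      have hDA : D * A = A := by rw [← hAT, this, Matrix.mul_one]
      have hD1 : D = 1 := by
        have := congrArg (· * A⁻¹) hDA
        simpa [Matrix.mul_assoc, Matrix.mul_nonsing_inv A hU] using this
      have := congrFun (congrFun hD1 ⟨0, by omega⟩) ⟨0, by omega⟩
      simp [hD, hε, Matrix.diagonal, Matrix.one_apply] at this
      linarith
    have hT2 : T + 1 ≠ 0 := by
      intro h
      have hTneg : T = -1 := eq_neg_of_add_eq_zero_left h
      have hDA : D * A = -A := by
        rw [← hAT, hTneg]
        simp [Matrix.mul_neg, Matrix.mul_one]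
      have hD1 : D = -1 := by
        have := congrArg (· * A⁻¹) hDA
        simpa [Matrix.mul_assoc, Matrix.mul_nonsing_inv A hU, Matrix.neg_mul] using this
      have := congrFun (congrFun hD1 ⟨1, by omega⟩) ⟨1, by omega⟩
      simp [hD, hε, Matrix.diagonal, Matrix.one_apply, Fin.ext_iff] at this
      linarith
    refine measure_mono_null key ?_
    exact measure_union_null (null_of_mulVec_zero _ hT1) (null_of_mulVec_zero _ hT2)
end

section
/- Let X ⊆ ℂ^n be a Zariski-closed set and let X_ℝ := X ∩ ℝ^n be its real part. Then the Krull dimension of X_ℝ, as a subspace of ℝ^n with the real Zariski topology, is at most the Krull dimension of X, as a subspace of ℂ^n with the complex Zariski topology. -/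
/-- The Zariski topology on `σ → K`: the topology generated by the basic open
sets `{x | p(x) ≠ 0}` for polynomials `p`; its closed sets are exactly the
common zero sets of families of polynomials over `K`. -/
def zariskiTopology (σ K : Type*) [CommSemiring K] : TopologicalSpace (σ → K) :=
  TopologicalSpace.generateFrom
    {U | ∃ p : MvPolynomial σ K, U = {x | MvPolynomial.eval x p ≠ 0}}


open MvPolynomial TopologicalSpace Topology

def zkZeroSet {σ K : Type*} [CommSemiring K] (T : Set (MvPolynomial σ K)) : Set (σ → K) :=
  {x | ∀ p ∈ T, eval x p = 0}

lemma zk_isClosed_zeroSet {σ K : Type*} [CommSemiring K] (T : Set (MvPolynomial σ K)) :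
    IsClosed[zariskiTopology σ K] (zkZeroSet T) := by
  letI := zariskiTopology σ K
  constructor
  have : (zkZeroSet T)ᶜ = ⋃ p ∈ T, {x : σ → K | eval x p ≠ 0} := by
    ext x; simp [zkZeroSet]
  rw [this]
  exact isOpen_biUnion fun p hp => TopologicalSpace.GenerateOpen.basic _ ⟨p, rfl⟩

lemma zk_closed_iff {σ K : Type*} [CommRing K] [IsDomain K] {F : Set (σ → K)}
    (hF : IsClosed[zariskiTopology σ K] F) :
    ∃ T : Set (MvPolynomial σ K), F = zkZeroSet T := by
  have h : TopologicalSpace.GenerateOpen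
      {U | ∃ p : MvPolynomial σ K, U = {x | MvPolynomial.eval x p ≠ 0}} Fᶜ :=
    hF.isOpen_compl
  have key : ∀ U, TopologicalSpace.GenerateOpen
      {U | ∃ p : MvPolynomial σ K, U = {x | MvPolynomial.eval x p ≠ 0}} U →
      ∃ T : Set (MvPolynomial σ K), Uᶜ = zkZeroSet T := by
    intro U hU
    induction hU with
    | basic V hV =>
      obtain ⟨p, rfl⟩ := hV
      exact ⟨{p}, by ext x; simp [zkZeroSet]⟩
    | univ => exact ⟨{1}, by ext x; simp [zkZeroSet]⟩
    | inter V W _ _ ihV ihW =>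
      obtain ⟨T₁, h₁⟩ := ihV
      obtain ⟨T₂, h₂⟩ := ihW
      refine ⟨Set.image2 (· * ·) T₁ T₂, ?_⟩
      rw [Set.compl_inter, h₁, h₂]
      ext x
      simp only [zkZeroSet, Set.mem_union, Set.mem_setOf_eq, Set.mem_image2]
      constructor
      · rintro (h | h) r ⟨p, hp, q, hq, rfl⟩
        · rw [map_mul]; exact mul_eq_zero_of_left (h p hp) _
        · rw [map_mul]; exact mul_eq_zero_of_right _ (h q hq)
      · intro h
        by_cases hx : ∀ p ∈ T₁, eval x p = 0
        · exact Or.inl hx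
        · push_neg at hx
          obtain ⟨p, hp, hpx⟩ := hx
          refine Or.inr fun q hq => ?_
          have := h (p * q) ⟨p, hp, q, hq, rfl⟩
          rw [map_mul] at this
          exact (mul_eq_zero.mp this).resolve_left hpx
    | sUnion 𝒮 _ ih =>
      choose Ts hTs using ih
      refine ⟨⋃ (s) (hs : s ∈ 𝒮), Ts s hs, ?_⟩
      ext x
      simp only [Set.mem_compl_iff, Set.mem_sUnion, not_exists, zkZeroSet,
        Set.mem_setOf_eq, Set.mem_iUnion]
      constructor
      · rintro h p ⟨s, hs, hp⟩
        have hx : x ∈ sᶜ := fun hxs => h s ⟨hs, hxs⟩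
        rw [hTs s hs] at hx
        exact hx p hp
      · rintro h s ⟨hs, hxs⟩
        have hx : x ∈ zkZeroSet (Ts s hs) := fun p hp => h p ⟨s, hs, hp⟩
        rw [← hTs s hs] at hx
        exact hx hxs
  obtain ⟨T, hT⟩ := key _ h
  exact ⟨T, by rw [← compl_compl F, hT]⟩

lemma zk_real_of_complex {n : ℕ} (p : MvPolynomial (Fin n) ℂ) :
    ∃ r : MvPolynomial (Fin n) ℝ,
      ∀ x : Fin n → ℝ, eval (fun i => (x i : ℂ)) p = 0 ↔ eval x r = 0 := by
  classical
  set conj := starRingEnd ℂ with hconj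
  set q := p * map conj p with hq
  have hqq : map conj q = q := by
    rw [hq, map_mul, map_map]
    have : conj.comp conj = RingHom.id ℂ := RingHom.ext fun z => Complex.conj_conj z
    rw [this, map_id, mul_comm]
  have hreal : ∀ m, ((coeff m q).re : ℂ) = coeff m q := by
    intro m
    have := congrArg (coeff m) hqq
    rw [coeff_map] at this
    exact Complex.conj_eq_iff_re.mp this
  refine ⟨∑ m ∈ q.support, monomial m ((coeff m q).re), fun x => ?_⟩
  set r := ∑ m ∈ q.support, monomial m ((coeff m q).re) with hr
  have hmap : map (algebraMap ℝ ℂ) r = q := by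
    rw [hr, map_sum]
    have : ∀ m ∈ q.support, map (algebraMap ℝ ℂ) (monomial m ((coeff m q).re))
        = monomial m (coeff m q) := by
      intro m _
      rw [map_monomial]
      congr 1
      exact hreal m
    rw [Finset.sum_congr rfl this, support_sum_monomial_coeff]
  set ι : Fin n → ℂ := fun i => (x i : ℂ) with hι
  have hconjι : conj ∘ ι = ι := by
    funext i; simp [hι, hconj]
  have h1 : eval ι (map conj p) = conj (eval ι p) := by
    rw [eval_map]
    have := eval₂_comp_left conj (RingHom.id ℂ) ι p
    simp only [RingHom.comp_id, hconjι] at this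
    rw [← this]
    rfl
  have h2 : eval ι q = eval ι p * conj (eval ι p) := by
    rw [hq, map_mul, h1]
  have h3 : eval ι q = ((eval x r : ℝ) : ℂ) := by
    rw [← hmap, eval_map]
    have hax : (algebraMap ℝ ℂ) ∘ x = ι := by funext i; simp [hι]
    have := eval₂_comp_left (algebraMap ℝ ℂ) (RingHom.id ℝ) x r
    simp only [RingHom.comp_id, hax] at this
    rw [← this]
    rfl
  constructor
  · intro h
    have : eval ι q = 0 := by rw [h2, h, zero_mul]
    rw [h3] at this
    exact_mod_cast this
  · intro h
    have : eval ι q = 0 := by rw [h3, h, Complex.ofReal_zero]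
    rw [h2] at this
    rcases mul_eq_zero.mp this with h' | h'
    · exact h'
    · simpa using h'

lemma zk_eval_coe {n : ℕ} (x : Fin n → ℝ) (r : MvPolynomial (Fin n) ℝ) :
    eval (fun i => (x i : ℂ)) (map (algebraMap ℝ ℂ) r) = ((eval x r : ℝ) : ℂ) := by
  rw [eval_map]
  have hax : (algebraMap ℝ ℂ) ∘ x = fun i => (x i : ℂ) := by funext i; simp
  have := eval₂_comp_left (algebraMap ℝ ℂ) (RingHom.id ℝ) x r
  simp only [RingHom.comp_id, hax] at this
  rw [← this]
  rfl

lemma zk_continuous_incl (n : ℕ) :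
    Continuous[zariskiTopology (Fin n) ℝ, zariskiTopology (Fin n) ℂ]
      (fun x i => (x i : ℂ)) := by
  letI := zariskiTopology (Fin n) ℝ
  letI := zariskiTopology (Fin n) ℂ
  apply continuous_generateFrom_iff.mpr
  rintro U ⟨p, rfl⟩
  obtain ⟨r, hr⟩ := zk_real_of_complex p
  have : (fun (x : Fin n → ℝ) i => (x i : ℂ)) ⁻¹' {y | eval y p ≠ 0}
      = {x | eval x r ≠ 0} := by
    ext x
    simp only [Set.mem_preimage, Set.mem_setOf_eq, ne_eq]
    exact not_congr (hr x)
  rw [this]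
  exact TopologicalSpace.GenerateOpen.basic _ ⟨r, rfl⟩

/-- For a Zariski-closed `X ⊆ ℂ^n`, the Krull dimension of its
real part `X_ℝ = X ∩ ℝ^n` (as a subspace of `ℝ^n` with the real Zariski topology)
is at most the Krull dimension of `X` (as a subspace of `ℂ^n` with the complex
Zariski topology). -/
theorem stmt_8 (n : ℕ) (X : Set (Fin n → ℂ))
    (hX : ∃ T : Set (MvPolynomial (Fin n) ℂ),
      X = {x | ∀ p ∈ T, MvPolynomial.eval x p = 0}) :
    @topologicalKrullDim {x : Fin n → ℝ // (fun i => (x i : ℂ)) ∈ X}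
        (TopologicalSpace.induced Subtype.val (zariskiTopology (Fin n) ℝ))
      ≤ @topologicalKrullDim X
        (TopologicalSpace.induced Subtype.val (zariskiTopology (Fin n) ℂ)) := by
  classical
  letI tR : TopologicalSpace (Fin n → ℝ) := zariskiTopology (Fin n) ℝ
  letI tC : TopologicalSpace (Fin n → ℂ) := zariskiTopology (Fin n) ℂ
  letI tXR : TopologicalSpace {x : Fin n → ℝ // (fun i => (x i : ℂ)) ∈ X} :=
    TopologicalSpace.induced Subtype.val tR
  letI tX : TopologicalSpace X := TopologicalSpace.induced Subtype.val tC
  show topologicalKrullDim _ ≤ topologicalKrullDim _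
  set ι : (Fin n → ℝ) → (Fin n → ℂ) := fun x i => (x i : ℂ) with hι
  have hcont : Continuous ι := zk_continuous_incl n
  set j : {x : Fin n → ℝ // (fun i => (x i : ℂ)) ∈ X} → X := fun x => ⟨ι x.1, x.2⟩ with hj
  have hjc : Continuous j := by
    apply continuous_induced_rng.mpr
    exact hcont.comp continuous_induced_dom
  -- key retraction property
  have key : ∀ Z : Set {x : Fin n → ℝ // (fun i => (x i : ℂ)) ∈ X},
      IsClosed Z → j ⁻¹' (closure (j '' Z)) = Z := by
    intro Z hZ
    obtain ⟨F, hFc, hFZ⟩ := isClosed_induced_iff.mp hZ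
    obtain ⟨T, rfl⟩ := zk_closed_iff hFc
    set C : Set (Fin n → ℂ) := zkZeroSet ((map (algebraMap ℝ ℂ)) '' T) with hC
    have hCc : IsClosed C := zk_isClosed_zeroSet _
    have hiC : ∀ y : Fin n → ℝ, ι y ∈ C ↔ y ∈ zkZeroSet T := by
      intro y
      constructor
      · intro h p hp
        have := h (map (algebraMap ℝ ℂ) p) ⟨p, hp, rfl⟩
        rw [zk_eval_coe] at this
        exact_mod_cast this
      · rintro h _ ⟨p, hp, rfl⟩
        rw [zk_eval_coe, h p hp, Complex.ofReal_zero]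
    have hC'c : IsClosed ((Subtype.val : X → (Fin n → ℂ)) ⁻¹' C) :=
      hCc.preimage continuous_induced_dom
    have hsub : j '' Z ⊆ (Subtype.val : X → (Fin n → ℂ)) ⁻¹' C := by
      rintro _ ⟨x, hxZ, rfl⟩
      show ι x.1 ∈ C
      rw [hiC]
      rw [← hFZ] at hxZ
      exact hxZ
    apply Set.Subset.antisymm
    · intro x hx
      have : j x ∈ (Subtype.val : X → (Fin n → ℂ)) ⁻¹' C :=
        closure_minimal hsub hC'c hx
      have : x.1 ∈ zkZeroSet T := (hiC x.1).mp this
      rw [← hFZ]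
      exact this
    · exact (Set.subset_preimage_image j Z).trans (Set.preimage_mono subset_closure)
  -- the strictly monotone map on irreducible closeds
  set f : IrreducibleCloseds {x : Fin n → ℝ // (fun i => (x i : ℂ)) ∈ X} →
      IrreducibleCloseds X := fun Z =>
    ⟨closure (j '' Z.carrier),
      (Z.isIrreducible'.image j hjc.continuousOn).closure, isClosed_closure⟩ with hf
  have hmono : Monotone f := by
    intro Z₁ Z₂ h
    exact closure_mono (Set.image_mono h)
  have hinj : Function.Injective f := by
    intro Z₁ Z₂ h
    have hcar : closure (j '' Z₁.carrier) = closure (j '' Z₂.carrier) :=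
      congrArg (fun W => W.carrier) h
    have h1 : Z₁.carrier = Z₂.carrier := by
      rw [← key Z₁.carrier Z₁.isClosed', ← key Z₂.carrier Z₂.isClosed', hcar]
    cases Z₁; cases Z₂
    simpa using h1
  exact Order.krullDim_le_of_strictMono f (hmono.strictMono_of_injective hinj)
end
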